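/- For every ε ∈ (0,1], the function h defined by h(x) = 6x²(1 − ε U((x₀−x)/x₀)) for 0 ≤ x < x₀ and h(x) = 6x² for x ≥ x₀, where U(τ) = (7τ² − 8τ + 2)τ² and x₀ = (3/5)^{1/4}, is nonnegative and nondecreasing on [0, ∞). -/

import Mathlib

noncomputable def U (τ : ℝ) : ℝ := (7 * τ^2 - 8 * τ + 2) * τ^2

noncomputable def x₀ : ℝ := (3/5 : ℝ) ^ ((1:ℝ)/4)

noncomputable def h (ε x : ℝ) : ℝ :=
  if x < x₀ then 6 * x^2 * (1 - ε * U ((x₀ - x) / x₀)) else 6 * x^2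

/-!
With `t = (x₀ - x) / x₀` the first branch of `h ε` is `6 x₀² (1 - t)² (1 - ε U t)`, and
`d/dt [(1 - t)² (1 - ε U t)] = -(1 - t) (2 (1 - ε U t) + ε (1 - t) U' t)`. The bracket factors as
`2 (1 - ε) + ε (1 - t) (42 t³ - 26 t² + 6 t + 2)`, which is nonnegative for `0 ≤ ε ≤ 1` and
`t ∈ [0, 1]`, so the first branch increases on `[0, x₀]`. Since `U 0 = 0` it meets the second
branch `6 x²` continuously at `x₀`, and nonnegativity follows from monotonicity and `h ε 0 = 0`.
-/

open Set

theorem hasDerivAt_U (t : ℝ) : HasDerivAt U (28 * t^3 - 24 * t^2 + 4 * t) t := by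
  have hU : U = fun τ => 7 * τ^4 - 8 * τ^3 + 2 * τ^2 := by funext τ; unfold U; ring
  rw [hU]
  refine ((((hasDerivAt_pow 4 t).const_mul 7).sub ((hasDerivAt_pow 3 t).const_mul 8)).add
    ((hasDerivAt_pow 2 t).const_mul 2)).congr_deriv ?_
  norm_num; ring

theorem hasDerivAt_one_sub_sq_mul_one_sub_U (ε t : ℝ) :
    HasDerivAt (fun τ => (1 - τ)^2 * (1 - ε * U τ))
      (-((1 - t) * (2 * (1 - ε * U t) + ε * (1 - t) * (28 * t^3 - 24 * t^2 + 4 * t)))) t := by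
  refine ((((hasDerivAt_id t).const_sub 1).pow 2).mul
    (((hasDerivAt_U t).const_mul ε).const_sub 1)).congr_deriv ?_
  norm_num; ring

theorem two_mul_one_sub_U_add_nonneg {ε t : ℝ} (hε0 : 0 ≤ ε) (hε1 : ε ≤ 1) (ht0 : 0 ≤ t)
    (ht1 : t ≤ 1) : 0 ≤ 2 * (1 - ε * U t) + ε * (1 - t) * (28 * t^3 - 24 * t^2 + 4 * t) := by
  have hcubic : 0 ≤ 42 * t^3 - 26 * t^2 + 6 * t + 2 := by
    nlinarith [mul_nonneg ht0 (sq_nonneg (t - 13/42))]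
  have hfactor : 2 * (1 - ε * U t) + ε * (1 - t) * (28 * t^3 - 24 * t^2 + 4 * t)
      = 2 * (1 - ε) + ε * ((1 - t) * (42 * t^3 - 26 * t^2 + 6 * t + 2)) := by
    unfold U; ring
  rw [hfactor]
  exact add_nonneg (by linarith) (mul_nonneg hε0 (mul_nonneg (sub_nonneg.2 ht1) hcubic))

theorem antitoneOn_one_sub_sq_mul_one_sub_U {ε : ℝ} (hε0 : 0 ≤ ε) (hε1 : ε ≤ 1) :
    AntitoneOn (fun τ => (1 - τ)^2 * (1 - ε * U τ)) (Icc 0 1) := by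
  have hderiv := hasDerivAt_one_sub_sq_mul_one_sub_U ε
  refine antitoneOn_of_deriv_nonpos (convex_Icc 0 1)
    (fun t _ => (hderiv t).continuousAt.continuousWithinAt)
    (fun t _ => (hderiv t).differentiableAt.differentiableWithinAt) fun t ht => ?_
  rw [interior_Icc] at ht
  rw [(hderiv t).deriv, neg_nonpos]
  exact mul_nonneg (sub_nonneg.2 ht.2.le) (two_mul_one_sub_U_add_nonneg hε0 hε1 ht.1.le ht.2.le)

theorem monotoneOn_mul_one_sub_U_rescaled {ε c : ℝ} (hε0 : 0 ≤ ε) (hε1 : ε ≤ 1) (hc : 0 < c) :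
    MonotoneOn (fun x => 6 * x^2 * (1 - ε * U ((c - x) / c))) (Icc 0 c) := by
  have hrescale : ∀ x, 6 * x^2 * (1 - ε * U ((c - x) / c))
      = 6 * c^2 * ((1 - (c - x) / c)^2 * (1 - ε * U ((c - x) / c))) := by
    intro x; field_simp; ring
  have hmaps : MapsTo (fun x => (c - x) / c) (Icc 0 c) (Icc 0 1) := fun x hx =>
    ⟨div_nonneg (by linarith [hx.2]) hc.le, (div_le_one hc).2 (by linarith [hx.1])⟩
  intro x hx y hy hxy
  simp only [hrescale]
  refine mul_le_mul_of_nonneg_left ?_ (by positivity)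
  exact antitoneOn_one_sub_sq_mul_one_sub_U hε0 hε1 (hmaps hy) (hmaps hx)
    (div_le_div_of_nonneg_right (by linarith) hc.le)

theorem x₀_pos : 0 < x₀ := by unfold x₀; positivity

theorem h_eqOn_Icc (ε : ℝ) :
    EqOn (h ε) (fun x => 6 * x^2 * (1 - ε * U ((x₀ - x) / x₀))) (Icc 0 x₀) := by
  intro x hx
  rcases hx.2.lt_or_eq with hlt | rfl
  · simp [h, hlt]
  · simp [h, U]

theorem h_eqOn_Ici (ε : ℝ) : EqOn (h ε) (fun x => 6 * x^2) (Ici x₀) := fun x hx => by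
  simp [h, not_lt.2 (mem_Ici.1 hx)]

theorem h_nonneg_monotone (ε : ℝ) (hε0 : 0 < ε) (hε1 : ε ≤ 1) :
    (∀ x ∈ Set.Ici (0:ℝ), 0 ≤ h ε x) ∧ MonotoneOn (h ε) (Set.Ici 0) := by
  have hmono : MonotoneOn (h ε) (Ici 0) := by
    rw [← Icc_union_Ici_eq_Ici x₀_pos.le]
    refine MonotoneOn.union_right ?_ ?_ (isGreatest_Icc x₀_pos.le) isLeast_Ici
    · exact (monotoneOn_mul_one_sub_U_rescaled hε0.le hε1 x₀_pos).congr (h_eqOn_Icc ε).symm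
    · intro x hx y hy hxy
      rw [h_eqOn_Ici ε hx, h_eqOn_Ici ε hy]
      have hx0 : 0 ≤ x := x₀_pos.le.trans hx
      dsimp only
      gcongr
  have hzero : h ε 0 = 0 := by simp [h, x₀_pos]
  exact ⟨fun x hx => hzero ▸ hmono self_mem_Ici hx hx, hmono⟩
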